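/- Let L be a positive integer and M ≥ 1 an integer. For each integer N ≥ 0 let r_{L,N} denote the unique real polynomial of degree at most L + N − 1 (degree at most L − 1 when N = 0) satisfying r(1−y) s_{L,N}(1−y) + r(y) s_{L,N}(y) = (2L+1)² 2^{−2L−2N+1} for all y. Then for all y ∈ ℝ: 4 y · r_{L,M}(y) = r_{L,M−1}(y) − 2^{−2L} · r_{L,M−1}(0) · (1 − 2y) · s_{L,M−1}(1−y). -/

import Mathlib

/-!
Write `S = s_{L,M-1}`, so that `s_{L,M} = X·S`. Combining the two Bezout identities shows that
`F = 4X·r_{L,M} - r_{L,M-1} + 2^{-2L} r_{L,M-1}(0) (1 - 2X) S(1 - X)` satisfies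
`F(1 - y) S(1 - y) + F(y) S(y) = 0`. Every complex root `z = w²` of `S` has `Re z ≤ 0`: a root of
`∑ C(2L+1, 2n) z^n` makes `(1 + w)^{2L+1} = -(1 - w)^{2L+1}`, hence `|1 + w| = |1 - w|` and
`Re w = 0`. So `S(y)` and `S(1 - y)` are coprime, and `F = S(1 - X)·q` with `q(1 - y) = -q(y)` and
`deg q ≤ 1`. The constant `2^{-2L} r_{L,M-1}(0)` is exactly what makes `F(0) = 0`, since
`S(1) = 2^{2L}`; thus `q` vanishes at `0` and `1`, and `F = 0`.
-/

open Polynomial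

/-- The real polynomial `s_{L,N}(y) = y^N ∑_{n=0}^{L} C(2L+1, 2n) y^n`. -/
noncomputable def sPoly (L N : ℕ) : Polynomial ℝ :=
  Polynomial.X ^ N *
    ∑ n ∈ Finset.range (L + 1),
      Polynomial.C ((Nat.choose (2 * L + 1) (2 * n) : ℝ)) * Polynomial.X ^ n

open Finset

theorem Finset.sum_range_two_mul {M : Type*} [AddCommMonoid M] (n : ℕ) (f : ℕ → M) :
    ∑ k ∈ range (2 * n), f k = ∑ i ∈ range n, (f (2 * i) + f (2 * i + 1)) := by
  induction n with
  | zero => simp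
  | succ n ih =>
    rw [Nat.mul_succ, sum_range_succ, sum_range_succ, sum_range_succ, ← ih, add_assoc]

theorem one_add_pow_add_one_sub_pow {R : Type*} [CommRing R] (L : ℕ) (w : R) :
    (1 + w) ^ (2 * L + 1) + (1 - w) ^ (2 * L + 1) =
      2 * ∑ n ∈ range (L + 1), ((2 * L + 1).choose (2 * n) : R) * (w ^ 2) ^ n := by
  rw [add_comm 1 w, sub_eq_add_neg, add_comm 1 (-w), add_pow, add_pow, ← sum_add_distrib,
    show 2 * L + 1 + 1 = 2 * (L + 1) by ring, sum_range_two_mul, mul_sum]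
  refine sum_congr rfl fun n _ => ?_
  rw [(even_two_mul n).neg_pow, (odd_two_mul_add_one n).neg_pow, ← pow_mul]
  ring

theorem aeval_sPoly {A : Type*} [CommRing A] [Algebra ℝ A] (L N : ℕ) (a : A) :
    aeval a (sPoly L N) =
      a ^ N * ∑ n ∈ range (L + 1), ((2 * L + 1).choose (2 * n) : A) * a ^ n := by
  simp [sPoly]

theorem sPoly_succ (L N : ℕ) : sPoly L (N + 1) = X * sPoly L N := by
  rw [sPoly, sPoly, pow_succ', mul_assoc]

theorem eval_one_sPoly (L N : ℕ) : (sPoly L N).eval 1 = 2 ^ (2 * L) := by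
  have h := one_add_pow_add_one_sub_pow L (1 : ℝ)
  rw [sub_self, zero_pow (by omega), one_add_one_eq_two, pow_succ] at h
  simp only [← coe_aeval_eq_eval, aeval_sPoly, one_pow, mul_one, one_mul] at h ⊢
  linear_combination -h / 2

theorem natDegree_sPoly (L N : ℕ) : (sPoly L N).natDegree = N + L := by
  set T := ∑ n ∈ range (L + 1), C ((2 * L + 1).choose (2 * n) : ℝ) * X ^ n
  have hle : T.natDegree ≤ L := natDegree_sum_le_of_forall_le _ _ fun n hn =>
    (natDegree_C_mul_X_pow_le _ _).trans (Nat.lt_succ_iff.mp (mem_range.mp hn))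
  have hcoeff : T.coeff L = 2 * L + 1 := by simp [T, finsetSum_coeff]
  have hcoeff_ne : T.coeff L ≠ 0 := by rw [hcoeff]; positivity
  have hT0 : T ≠ 0 := fun h => hcoeff_ne (by rw [h, coeff_zero])
  rw [sPoly, natDegree_mul (pow_ne_zero _ X_ne_zero) hT0, natDegree_X_pow,
    natDegree_eq_of_le_of_coeff_ne_zero hle hcoeff_ne]

theorem re_nonpos_of_aeval_sPoly_eq_zero (L N : ℕ) {z : ℂ} (h : aeval z (sPoly L N) = 0) :
    z.re ≤ 0 := by
  rw [aeval_sPoly, mul_eq_zero] at h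
  obtain h | h := h
  · simp [pow_eq_zero_iff'.mp h]
  obtain ⟨w, rfl⟩ := IsAlgClosed.exists_pow_nat_eq z two_pos
  have hsum : (1 + w) ^ (2 * L + 1) = -(1 - w) ^ (2 * L + 1) := by
    linear_combination one_add_pow_add_one_sub_pow L w + 2 * h
  have hnorm : ‖1 + w‖ = ‖1 - w‖ := by
    rw [← pow_left_inj₀ (norm_nonneg _) (norm_nonneg _) (by omega : 2 * L + 1 ≠ 0)]
    simp only [← norm_pow, hsum, norm_neg]
  have hre : w.re = 0 := by
    have := congrArg (· ^ 2) hnorm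
    simp only [Complex.sq_norm, Complex.normSq_apply, Complex.add_re, Complex.sub_re,
      Complex.add_im, Complex.sub_im, Complex.one_re, Complex.one_im] at this
    linear_combination this / 4
  simp [sq, hre, mul_self_nonneg]

theorem isCoprime_sPoly_comp_one_sub_X (L N : ℕ) :
    IsCoprime (sPoly L N) ((sPoly L N).comp (1 - X)) := by
  refine (isCoprime_iff_aeval_ne_zero_of_isAlgClosed ℝ ℂ _ _).2 fun z => ?_
  by_contra! ⟨h₀, h₁⟩
  rw [aeval_comp] at h₁
  have hz := re_nonpos_of_aeval_sPoly_eq_zero L N h₀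
  have h1z := re_nonpos_of_aeval_sPoly_eq_zero L N (z := 1 - z) (by simpa using h₁)
  rw [Complex.sub_re, Complex.one_re] at h1z
  linarith

section Reflection

variable {K : Type*} [Field K]

theorem comp_one_sub_X_comp_one_sub_X (p : K[X]) : (p.comp (1 - X)).comp (1 - X) = p := by
  simp [comp_assoc, sub_comp]

theorem comp_one_sub_X_eq_zero_iff {p : K[X]} : p.comp (1 - X) = 0 ↔ p = 0 :=
  ⟨fun h => by rw [← comp_one_sub_X_comp_one_sub_X p, h, zero_comp],
    fun h => by rw [h, zero_comp]⟩

theorem natDegree_comp_one_sub_X (p : K[X]) : (p.comp (1 - X)).natDegree = p.natDegree := by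
  rw [natDegree_comp, ← neg_sub, natDegree_neg, ← C_1, natDegree_X_sub_C, mul_one]

theorem eq_zero_of_comp_one_sub_X_eq_neg {q : K[X]} (hq : q.comp (1 - X) = -q)
    (hdeg : q.natDegree ≤ 1) (h0 : q.eval 0 = 0) : q = 0 := by
  classical
  have h1 : q.eval 1 = 0 := by
    simpa [h0] using congrArg (eval 0) hq
  refine eq_zero_of_natDegree_lt_card_of_eval_eq_zero' q {0, 1} (by simp [h0, h1]) ?_
  rw [card_pair zero_ne_one]
  omega

theorem exists_eq_comp_one_sub_X_mul {S F : K[X]} (hcop : IsCoprime S (S.comp (1 - X)))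
    (hF : (F * S).comp (1 - X) = -(F * S)) (hS : S ≠ 0) :
    ∃ q, F = S.comp (1 - X) * q ∧ q.comp (1 - X) = -q := by
  obtain ⟨q, rfl⟩ : S.comp (1 - X) ∣ F := by
    refine hcop.symm.dvd_of_dvd_mul_right ⟨-F.comp (1 - X), ?_⟩
    rw [← neg_eq_iff_eq_neg.mpr hF, mul_comp]
    ring
  refine ⟨q, rfl, ?_⟩
  rw [mul_comp, mul_comp, comp_one_sub_X_comp_one_sub_X] at hF
  have : S * S.comp (1 - X) * (q.comp (1 - X) + q) = 0 := by linear_combination hF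
  have hSSc : S * S.comp (1 - X) ≠ 0 := mul_ne_zero hS (comp_one_sub_X_eq_zero_iff.not.mpr hS)
  exact eq_neg_of_add_eq_zero_left ((mul_eq_zero.mp this).resolve_left hSSc)

theorem eq_zero_of_comp_one_sub_X_mul_eq_neg {S F : K[X]} (hcop : IsCoprime S (S.comp (1 - X)))
    (hF : (F * S).comp (1 - X) = -(F * S)) (hdeg : F.natDegree ≤ S.natDegree + 1)
    (hF0 : F.eval 0 = 0) (hS1 : S.eval 1 ≠ 0) : F = 0 := by
  have hS : S ≠ 0 := fun h => hS1 (by rw [h, eval_zero])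
  obtain ⟨q, rfl, hq⟩ := exists_eq_comp_one_sub_X_mul hcop hF hS
  have hq0 : q.eval 0 = 0 := by
    simp only [eval_mul, eval_comp, eval_sub, eval_one, eval_X, sub_zero] at hF0
    exact (mul_eq_zero.mp hF0).resolve_left hS1
  rcases eq_or_ne q 0 with rfl | hq_ne
  · exact mul_zero _
  rw [natDegree_mul (comp_one_sub_X_eq_zero_iff.not.mpr hS) hq_ne,
    natDegree_comp_one_sub_X] at hdeg
  rw [eq_zero_of_comp_one_sub_X_eq_neg hq (by omega) hq0, mul_zero]

end Reflection

theorem bezout_recursion_general (L M : ℕ) (hM : 1 ≤ M)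
    (rM rM' : Polynomial ℝ)
    (hdegM : rM.natDegree ≤ L + M - 1)
    (hdegM' : rM'.natDegree ≤ L + (M - 1) - 1)
    (hrM : ∀ y : ℝ,
      rM.eval (1 - y) * (sPoly L M).eval (1 - y) + rM.eval y * (sPoly L M).eval y =
        (2 * (L : ℝ) + 1) ^ 2 * (2 : ℝ) ^ (-(2 * (L : ℤ)) - 2 * (M : ℤ) + 1))
    (hrM' : ∀ y : ℝ,
      rM'.eval (1 - y) * (sPoly L (M - 1)).eval (1 - y) +
          rM'.eval y * (sPoly L (M - 1)).eval y =
        (2 * (L : ℝ) + 1) ^ 2 * (2 : ℝ) ^ (-(2 * (L : ℤ)) - 2 * ((M : ℤ) - 1) + 1)) :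
    ∀ y : ℝ,
      4 * y * rM.eval y =
        rM'.eval y -
          (2 : ℝ) ^ (-(2 * (L : ℤ))) * rM'.eval 0 * (1 - 2 * y) *
            (sPoly L (M - 1)).eval (1 - y) := by
  obtain ⟨m, rfl⟩ := Nat.exists_eq_add_of_le' hM
  simp only [Nat.add_sub_cancel, sPoly_succ] at hdegM hdegM' hrM hrM' ⊢
  set S := sPoly L m
  set c : ℝ := 2 ^ (-(2 * (L : ℤ))) * rM'.eval 0
  set F : ℝ[X] := 4 * X * rM - rM' + C c * (1 - 2 * X) * S.comp (1 - X)
  have hFeval (y : ℝ) :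
      F.eval y = 4 * y * rM.eval y - rM'.eval y + c * (1 - 2 * y) * S.eval (1 - y) := by
    simp [F, eval_comp]
  have hpow : (2 : ℝ) ^ (-(2 * (L : ℤ)) - 2 * (((m + 1 : ℕ) : ℤ) - 1) + 1) =
      2 ^ (2 : ℤ) * 2 ^ (-(2 * (L : ℤ)) - 2 * ((m + 1 : ℕ) : ℤ) + 1) := by
    rw [← zpow_add₀ two_ne_zero]; congr 1; ring
  have hsymm : (F * S).comp (1 - X) = -(F * S) := by
    refine Polynomial.funext fun y => ?_
    have h := hrM y
    simp only [eval_mul, eval_X] at h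
    simp only [eval_comp, eval_mul, eval_neg, eval_sub, eval_one, eval_X, hFeval, sub_sub_cancel]
    linear_combination 4 * h - hrM' y - (2 * (L : ℝ) + 1) ^ 2 * hpow
  have hF0 : F.eval 0 = 0 := by
    have : (2 : ℝ) ^ (-(2 * (L : ℤ))) * 2 ^ (2 * L) = 1 := by
      rw [zpow_neg, ← zpow_natCast]; push_cast; exact inv_mul_cancel₀ (by positivity)
    rw [hFeval, sub_zero, eval_one_sPoly]
    linear_combination rM'.eval 0 * this
  have hdeg : F.natDegree ≤ S.natDegree + 1 := by
    simp only [F]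
    compute_degree
    simp only [natDegree_comp_one_sub_X, natDegree_sPoly, S]
    omega
  have hF : F = 0 := eq_zero_of_comp_one_sub_X_mul_eq_neg (isCoprime_sPoly_comp_one_sub_X L m)
    hsymm hdeg hF0 (by rw [eval_one_sPoly]; positivity)
  intro y
  have := hFeval y
  rw [hF, eval_zero] at this
  linear_combination -this

/-- recursive relation between the Bezout solutions `r_{L,M}` and
`r_{L,M-1}`:
`4 y r_{L,M}(y) = r_{L,M-1}(y) - 2^{-2L} r_{L,M-1}(0) (1 - 2y) s_{L,M-1}(1-y)`. -/
theorem bezout_recursion (L M : ℕ) (hL : 0 < L) (hM : 1 ≤ M)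
    (rM rM' : Polynomial ℝ)
    (hdegM : rM.natDegree ≤ L + M - 1)
    (hdegM' : rM'.natDegree ≤ L + (M - 1) - 1)
    (hrM : ∀ y : ℝ,
      rM.eval (1 - y) * (sPoly L M).eval (1 - y) + rM.eval y * (sPoly L M).eval y =
        (2 * (L : ℝ) + 1) ^ 2 * (2 : ℝ) ^ (-(2 * (L : ℤ)) - 2 * (M : ℤ) + 1))
    (hrM' : ∀ y : ℝ,
      rM'.eval (1 - y) * (sPoly L (M - 1)).eval (1 - y) +
          rM'.eval y * (sPoly L (M - 1)).eval y =
        (2 * (L : ℝ) + 1) ^ 2 * (2 : ℝ) ^ (-(2 * (L : ℤ)) - 2 * ((M : ℤ) - 1) + 1)) :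
    ∀ y : ℝ,
      4 * y * rM.eval y =
        rM'.eval y -
          (2 : ℝ) ^ (-(2 * (L : ℤ))) * rM'.eval 0 * (1 - 2 * y) *
            (sPoly L (M - 1)).eval (1 - y) :=
  bezout_recursion_general L M hM rM rM' hdegM hdegM' hrM hrM'
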